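/- There is no triple (a+b, ℓ, σ) with ℓ > 0 and σ : (0,∞) → ℝ satisfying σ(r)·sin(ℓr)/(2ℓ) = (n-1)/2 + ((a+b)/2)(cos(ℓr) - 1) for all r > 0 with σ(r) > 0 for all r, where n ≥ 2. -/
import Mathlib


theorem stmt12 (n : ℕ) (hn : 2 ≤ n) :
    ¬ ∃ (s ℓ : ℝ) (σ : ℝ → ℝ), 0 < ℓ ∧ (∀ r > 0, 0 < σ r) ∧
      ∀ r > 0, σ r * Real.sin (ℓ * r) / (2 * ℓ) =
        ((n : ℝ) - 1) / 2 + (s / 2) * (Real.cos (ℓ * r) - 1) := by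
  rintro ⟨s, ℓ, σ, hℓ, hσ, h⟩
  have hr : (0:ℝ) < 2 * Real.pi / ℓ := by positivity
  have heq := h _ hr
  have hmul : ℓ * (2 * Real.pi / ℓ) = 2 * Real.pi := by
    field_simp
  rw [hmul, Real.sin_two_pi, Real.cos_two_pi] at heq
  have hn' : (2:ℝ) ≤ (n:ℝ) := by exact_mod_cast hn
  rw [mul_zero, zero_div] at heq
  linarith
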